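/- Contiguous relation for monic q-Laguerre polynomials: for n ≥ 1 and real α, L̃_n^{(α−1)}(x; q) = L̃_n^{(α)}(x; q) − [(q^n − 1) q / q^{2n+α}] · L̃_{n−1}^{(α)}(x; q), as an identity of polynomials in x. -/

import Mathlib

/-- The q-Pochhammer symbol `(a; q)_m`. -/
noncomputable def qPoch (q a : ℝ) (m : ℕ) : ℝ := ∏ j ∈ Finset.range m, (1 - a * q ^ j)

/-- The monic q-Laguerre polynomial
`L̃_n^{(α)}(x; q) = (−1)^n q^{−n(n+α)} (q^{α+1};q)_n ₁φ₁(q^{-n}; q^{α+1}; q, −q^{n+α+1} x)`,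
where real powers of `q` are taken via `Real.rpow`. -/
noncomputable def qLaguerre (q α : ℝ) (n : ℕ) (x : ℝ) : ℝ :=
  (-1 : ℝ) ^ n * q ^ (-((n : ℝ) * ((n : ℝ) + α))) * qPoch q (q ^ (α + 1)) n *
    ∑ m ∈ Finset.range (n + 1),
      qPoch q (q ^ (-(n : ℤ))) m * (-1 : ℝ) ^ m * q ^ (m * (m - 1) / 2) *
          (-(q ^ ((n : ℝ) + α + 1)) * x) ^ m /
        (qPoch q (q ^ (α + 1)) m * qPoch q q m)


/-!
Cancel `(q^{α+1};q)_m` from `(q^{α+1};q)_n` in each term of the `₁φ₁` series; then all three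
polynomials have explicit coefficients and the relation holds coefficientwise. In the
`x ^ m`-coefficient the real powers of `q` combine into one common factor, and what is left is
`(q^n - q^m)(q^{-n};q)_m = (q^n - 1)(q^{1-n};q)_m` together with peeling one factor off
`(q^{α+m};q)_{n-m}` on the left and off `(q^{α+1+m};q)_{n-m}` on the right.
-/

section qPoch

variable (q a : ℝ)

@[simp]
lemma qPoch_zero : qPoch q a 0 = 1 := Finset.prod_range_zero _

lemma qPoch_succ (m : ℕ) : qPoch q a (m + 1) = qPoch q a m * (1 - a * q ^ m) :=
  Finset.prod_range_succ _ m

lemma qPoch_succ' (m : ℕ) : qPoch q a (m + 1) = (1 - a) * qPoch q (a * q) m := by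
  rw [qPoch, Finset.prod_range_succ', pow_zero, mul_one, mul_comm, qPoch]
  simp only [pow_succ', mul_assoc]

lemma qPoch_add (m k : ℕ) : qPoch q a (m + k) = qPoch q a m * qPoch q (a * q ^ m) k := by
  rw [qPoch, Finset.prod_range_add, qPoch, qPoch]
  simp only [pow_add, mul_assoc]

lemma qPoch_eq_zero_iff {m : ℕ} : qPoch q a m = 0 ↔ ∃ j < m, a * q ^ j = 1 := by
  simp only [qPoch, Finset.prod_eq_zero_iff, Finset.mem_range, sub_eq_zero,
    eq_comm (a := (1 : ℝ))]

/-- Both sides equal `a⁻¹ (a; q)_{m+1}`. -/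
lemma inv_sub_pow_mul_qPoch {a : ℝ} (ha : a ≠ 0) (m : ℕ) :
    (a⁻¹ - q ^ m) * qPoch q a m = (a⁻¹ - 1) * qPoch q (a * q) m := by
  have h := (qPoch_succ q a m).symm.trans (qPoch_succ' q a m)
  field_simp
  linear_combination h

end qPoch

lemma qPoch_zpow_neg_eq_zero {q : ℝ} (hq : q ≠ 0) {n m : ℕ} (h : n < m) :
    qPoch q (q ^ (-(n : ℤ))) m = 0 :=
  (qPoch_eq_zero_iff q _).2
    ⟨n, h, by rw [zpow_neg, zpow_natCast, inv_mul_cancel₀ (pow_ne_zero n hq)]⟩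

lemma sub_pow_mul_qPoch_zpow_neg {q : ℝ} (hq : q ≠ 0) (n m : ℕ) :
    (q ^ (n + 1) - q ^ m) * qPoch q (q ^ (-((n + 1 : ℕ) : ℤ))) m
      = (q ^ (n + 1) - 1) * qPoch q (q ^ (-(n : ℤ))) m := by
  have hinv : (q ^ (-((n + 1 : ℕ) : ℤ)))⁻¹ = q ^ (n + 1) := by
    rw [zpow_neg, inv_inv, zpow_natCast]
  have hmul : q ^ (-((n + 1 : ℕ) : ℤ)) * q = q ^ (-(n : ℤ)) := by
    rw [← zpow_add_one₀ hq]; push_cast; ring_nf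
  simpa only [hinv, hmul] using inv_sub_pow_mul_qPoch q (zpow_ne_zero (-((n + 1 : ℕ) : ℤ)) hq) m

lemma qPoch_rpow_ne_zero {q t : ℝ} (hq : 0 < q) (hq1 : q ≠ 1) {m : ℕ}
    (ht : ∀ j < m, t + j ≠ 0) : qPoch q (q ^ t) m ≠ 0 := by
  rw [Ne, qPoch_eq_zero_iff]
  rintro ⟨j, hj, h⟩
  rw [← Real.rpow_natCast, ← Real.rpow_add hq, ← Real.rpow_zero q,
    Real.rpow_right_inj hq hq1] at h
  exact ht j hj h

/-- The `x ^ m`-coefficient of `qLaguerre q α n`, with `(q^{α+1};q)_n / (q^{α+1};q)_m` already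
cancelled to `(q^{α+1+m};q)_{n-m}`; this is the only step that needs `(q^{α+1};q)_m ≠ 0`. -/
noncomputable def qLaguerreCoeff (q α : ℝ) (n m : ℕ) : ℝ :=
  (-1) ^ n * q ^ (((n : ℝ) + α + 1) * m - n * (n + α)) * qPoch q (q ^ (-(n : ℤ))) m *
    qPoch q (q ^ (α + 1 + m)) (n - m) * q ^ (m * (m - 1) / 2) / qPoch q q m

lemma qLaguerreCoeff_eq_zero {q : ℝ} (hq : q ≠ 0) (α : ℝ) {n m : ℕ} (h : n < m) :
    qLaguerreCoeff q α n m = 0 := by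
  rw [qLaguerreCoeff, qPoch_zpow_neg_eq_zero hq h, mul_zero, zero_mul, zero_mul, zero_div]

theorem qLaguerre_eq_sum {q α : ℝ} {n : ℕ} (hq : 0 < q) (hq1 : q ≠ 1)
    (hα : ∀ j < n, α + 1 + j ≠ 0) (x : ℝ) :
    qLaguerre q α n x = ∑ m ∈ Finset.range (n + 1), qLaguerreCoeff q α n m * x ^ m := by
  rw [qLaguerre, Finset.mul_sum]
  refine Finset.sum_congr rfl fun m hm => ?_
  obtain ⟨k, rfl⟩ := Nat.exists_eq_add_of_le (Nat.lt_succ_iff.1 (Finset.mem_range.1 hm))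
  have hP : qPoch q (q ^ (α + 1)) m ≠ 0 := qPoch_rpow_ne_zero hq hq1 fun j hj => hα j (by omega)
  have hshift : q ^ (α + 1) * q ^ m = q ^ (α + 1 + m) := (Real.rpow_add_natCast hq.ne' _ _).symm
  have hpow :
      q ^ (-((m + k : ℕ) * ((m + k : ℕ) + α))) * (q ^ (((m + k : ℕ) : ℝ) + α + 1)) ^ m
        = q ^ ((((m + k : ℕ) : ℝ) + α + 1) * m - (m + k : ℕ) * ((m + k : ℕ) + α)) := by
    rw [← Real.rpow_mul_natCast hq.le, ← Real.rpow_add hq]; ring_nf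
  rw [qLaguerreCoeff, qPoch_add, hshift, Nat.add_sub_cancel_left, mul_pow, neg_pow, ← hpow]
  field_simp
  ring_nf
  rw [pow_mul', neg_one_sq, one_pow, mul_one]

theorem qLaguerreCoeff_shift_alpha {q : ℝ} (hq : 0 < q) (α : ℝ) (n m : ℕ) :
    qLaguerreCoeff q (α - 1) (n + 1) m
      = qLaguerreCoeff q α (n + 1) m
        - ((q ^ (n + 1) - 1) * q / q ^ (2 * ((n + 1 : ℕ) : ℝ) + α)) * qLaguerreCoeff q α n m := by
  set u := q ^ ((((n + 1 : ℕ) : ℝ) + α + 1) * m - (n + 1 : ℕ) * ((n + 1 : ℕ) + α) - m)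
    with hu_def
  have hexp₁ :
      q ^ ((((n + 1 : ℕ) : ℝ) + (α - 1) + 1) * m - (n + 1 : ℕ) * ((n + 1 : ℕ) + (α - 1)))
        = u * q ^ (n + 1) := by
    rw [← Real.rpow_natCast, ← Real.rpow_add hq]; congr 1; push_cast; ring
  have hexp₂ : q ^ ((((n + 1 : ℕ) : ℝ) + α + 1) * m - (n + 1 : ℕ) * ((n + 1 : ℕ) + α))
      = u * q ^ m := by
    rw [← Real.rpow_natCast, ← Real.rpow_add hq]; congr 1; ring
  have hexp₃ : (q ^ (n + 1) - 1) * q / q ^ (2 * ((n + 1 : ℕ) : ℝ) + α)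
      * q ^ (((n : ℝ) + α + 1) * m - n * (n + α)) = (q ^ (n + 1) - 1) * u := by
    have hu :
        u = q ^ (((n : ℝ) + α + 1) * m - n * (n + α) + 1 - (2 * ((n + 1 : ℕ) : ℝ) + α)) := by
      rw [hu_def]; congr 1; push_cast; ring
    rw [hu, Real.rpow_sub hq (_ + 1), Real.rpow_add_one hq.ne']
    ring
  have hB := sub_pow_mul_qPoch_zpow_neg hq.ne' n m
  unfold qLaguerreCoeff
  rw [sub_add_cancel]
  rcases le_or_gt m n with hmn | hnm
  · obtain ⟨l, rfl⟩ := Nat.exists_eq_add_of_le hmn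
    have hshift : q ^ (α + m) * q = q ^ (α + 1 + m) := by
      rw [← Real.rpow_add_one hq.ne']; ring_nf
    have hαn : q ^ (m + l + 1) * q ^ (α + m) = q ^ m * (q ^ (α + 1 + m) * q ^ l) := by
      simp only [← Real.rpow_natCast, ← Real.rpow_add hq]; congr 1; push_cast; ring
    rw [show m + l + 1 - m = l + 1 by omega, Nat.add_sub_cancel_left, qPoch_succ', hshift,
      qPoch_succ, hexp₁, hexp₂]
    linear_combination
      (-1) ^ (m + l) * q ^ (m * (m - 1) / 2) / qPoch q q m * qPoch q (q ^ (α + 1 + m)) l *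
      (qPoch q (q ^ (-((m + l : ℕ) : ℤ))) m * hexp₃ - u * hB
        + u * qPoch q (q ^ (-((m + l + 1 : ℕ) : ℤ))) m * hαn)
  · rw [Nat.sub_eq_zero_of_le (hnm : n + 1 ≤ m), Nat.sub_eq_zero_of_le hnm.le, qPoch_zero,
      qPoch_zero, hexp₁, hexp₂]
    linear_combination (-1) ^ n * q ^ (m * (m - 1) / 2) / qPoch q q m *
      (qPoch q (q ^ (-(n : ℤ))) m * hexp₃ - u * hB)

/-- Contiguous relation for monic q-Laguerre polynomials:
`L̃_n^{(α−1)}(x; q) = L̃_n^{(α)}(x; q) − ((q^n − 1) q / q^{2n+α}) L̃_{n−1}^{(α)}(x; q)`. -/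
theorem qLaguerre_shift_alpha (q α : ℝ) (n : ℕ)
    (hq : 0 < q) (hq1 : q < 1) (hn : 1 ≤ n)
    (hα : ∀ m : ℕ, α + (m : ℝ) ≠ 0) :
    ∀ x : ℝ,
      qLaguerre q (α - 1) n x
        = qLaguerre q α n x
          - ((q ^ n - 1) * q / q ^ (2 * (n : ℝ) + α)) * qLaguerre q α (n - 1) x := by
  intro x
  obtain ⟨N, rfl⟩ : ∃ N, n = N + 1 := ⟨n - 1, by omega⟩
  have hα₀ : ∀ j : ℕ, α - 1 + 1 + j ≠ 0 := fun j => by rw [sub_add_cancel]; exact hα j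
  have hα₁ : ∀ j : ℕ, α + 1 + j ≠ 0 := fun j => by
    simpa only [Nat.cast_succ, add_comm (j : ℝ), add_assoc] using hα (j + 1)
  have hN :
      qLaguerre q α N x = ∑ m ∈ Finset.range (N + 1 + 1), qLaguerreCoeff q α N m * x ^ m := by
    rw [qLaguerre_eq_sum hq hq1.ne (fun j _ => hα₁ j), Finset.sum_range_succ _ (N + 1),
      qLaguerreCoeff_eq_zero hq.ne' α (Nat.lt_succ_self N), zero_mul, add_zero]
  rw [Nat.add_sub_cancel, hN, qLaguerre_eq_sum hq hq1.ne (fun j _ => hα₀ j),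
    qLaguerre_eq_sum hq hq1.ne (fun j _ => hα₁ j), Finset.mul_sum, ← Finset.sum_sub_distrib]
  refine Finset.sum_congr rfl fun m _ => ?_
  rw [qLaguerreCoeff_shift_alpha hq]
  ring
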